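/- arXiv:2307.14699 — 3 statements merged into one kernel-verified Lean document; each statement's English description precedes it below -/
import Mathlib

section
/- Let 0 < p < ∞ and let w : 𝔻 → [0,∞) be measurable with ∫_𝔻 w dA > 0, and suppose the weighted Bergman space A^p_w contains a nonzero function. If for every c ∈ (0,1) the following domination property holds — for all f, g ∈ A^p_w with |f(z)| ≤ |g(z)| for all c ≤ |z| < 1 one has ∫_𝔻 |f|^p w dA ≤ ∫_𝔻 |g|^p w dA — then a contradiction follows. Equivalently, the supremum of admissible radii c is strictly less than 1. -/
open MeasureTheory Set

/-- The zero set of a not-identically-zero holomorphic function on the unit ball is null. -/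
lemma korenblum_aux_zero_set_null (f : ℂ → ℂ)
    (hf : DifferentiableOn ℂ f (Metric.ball (0:ℂ) 1))
    (hne : ∃ z ∈ Metric.ball (0:ℂ) 1, f z ≠ 0) :
    volume ({z | f z = 0} ∩ Metric.ball (0:ℂ) 1) = 0 := by
  set S : Set ℂ := {z | f z = 0} ∩ Metric.ball (0:ℂ) 1 with hS
  have hA : AnalyticOnNhd ℂ f (Metric.ball (0:ℂ) 1) :=
    hf.analyticOnNhd Metric.isOpen_ball
  have hpre : IsPreconnected (Metric.ball (0:ℂ) 1) :=
    (convex_ball (0:ℂ) 1).isPreconnected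
  have hdisc : DiscreteTopology S := by
    rw [discreteTopology_subtype_iff]
    rintro x ⟨hx0, hxball⟩
    rcases (hA x hxball).eventually_eq_zero_or_eventually_ne_zero with h | h
    · exfalso
      obtain ⟨z, hz, hzne⟩ := hne
      exact hzne (hA.eqOn_zero_of_preconnected_of_eventuallyEq_zero hpre hxball h hz)
    · set L := nhdsWithin x {x}ᶜ ⊓ Filter.principal S with hL
      have h1 : ∀ᶠ z in L, f z ≠ 0 := h.filter_mono inf_le_left
      have h2 : ∀ᶠ z in L, z ∈ S :=
        Filter.le_principal_iff.mp inf_le_right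
      have : ∀ᶠ z in L, False := by
        filter_upwards [h1, h2] with z hz1 hz2
        exact hz1 hz2.1
      exact Filter.eventually_false_iff_eq_bot.mp this
  have hcount : S.Countable := (HereditarilyLindelof_LindelofSets S).countable hdisc
  exact hcount.measure_zero _

theorem korenblum_radius_lt_one (p : ℝ) (hp : 0 < p) (w : ℂ → ℝ)
    (hwm : Measurable w) (hw0 : ∀ z ∈ Metric.ball (0:ℂ) 1, 0 ≤ w z)
    (hwpos : 0 < ∫⁻ z in Metric.ball (0:ℂ) 1, ENNReal.ofReal (w z))
    (f₀ : ℂ → ℂ) (hf₀ : DifferentiableOn ℂ f₀ (Metric.ball (0:ℂ) 1))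
    (hf₀mem : IntegrableOn (fun z => ‖f₀ z‖ ^ p * w z) (Metric.ball (0:ℂ) 1))
    (hf₀ne : ∃ z ∈ Metric.ball (0:ℂ) 1, f₀ z ≠ 0)
    (hdom : ∀ c ∈ Set.Ioo (0:ℝ) 1, ∀ f g : ℂ → ℂ,
      DifferentiableOn ℂ f (Metric.ball (0:ℂ) 1) →
      DifferentiableOn ℂ g (Metric.ball (0:ℂ) 1) →
      IntegrableOn (fun z => ‖f z‖ ^ p * w z) (Metric.ball (0:ℂ) 1) →
      IntegrableOn (fun z => ‖g z‖ ^ p * w z) (Metric.ball (0:ℂ) 1) →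
      (∀ z : ℂ, c ≤ ‖z‖ → ‖z‖ < 1 → ‖f z‖ ≤ ‖g z‖) →
      (∫ z in Metric.ball (0:ℂ) 1, ‖f z‖ ^ p * w z) ≤
        ∫ z in Metric.ball (0:ℂ) 1, ‖g z‖ ^ p * w z) :
    False := by
  set B : Set ℂ := Metric.ball (0:ℂ) 1 with hB
  have hBmeas : MeasurableSet B := measurableSet_ball
  -- basic functions
  set F : ℂ → ℝ := fun z => ‖f₀ z‖ ^ p * w z with hF
  set G : ℂ → ℝ := fun z => ‖z‖ ^ p * F z with hG
  -- nonnegativity on B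
  have hFnonneg : ∀ z ∈ B, 0 ≤ F z := fun z hz =>
    mul_nonneg (Real.rpow_nonneg (norm_nonneg _) p) (hw0 z hz)
  have hnormlt : ∀ z ∈ B, ‖z‖ < 1 := by
    intro z hz
    rw [hB, mem_ball_zero_iff] at hz
    exact hz
  have hrpow_lt_one : ∀ z ∈ B, ‖z‖ ^ p < 1 := by
    intro z hz
    rcases eq_or_lt_of_le (norm_nonneg z) with h0 | h0
    · rw [← h0, Real.zero_rpow hp.ne']; norm_num
    · exact Real.rpow_lt_one (norm_nonneg z) (hnormlt z hz) hp
  have hrpow_nonneg : ∀ z : ℂ, (0:ℝ) ≤ ‖z‖ ^ p := fun z =>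
    Real.rpow_nonneg (norm_nonneg z) p
  -- integrability of G
  have hFm : AEStronglyMeasurable F (volume.restrict B) := hf₀mem.aestronglyMeasurable
  have hGm : AEStronglyMeasurable G (volume.restrict B) :=
    ((continuous_norm.rpow_const (fun _ => Or.inr hp.le)).aestronglyMeasurable).mul hFm
  have haeB : ∀ᵐ z ∂(volume.restrict B), z ∈ B := ae_restrict_mem hBmeas
  have hGint : IntegrableOn G B := by
    refine Integrable.mono hf₀mem hGm ?_
    filter_upwards [haeB] with z hz
    have h1 : 0 ≤ F z := hFnonneg z hz
    have h2 : 0 ≤ ‖z‖ ^ p := hrpow_nonneg z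
    have h3 : ‖z‖ ^ p ≤ 1 := (hrpow_lt_one z hz).le
    rw [Real.norm_eq_abs, Real.norm_eq_abs, abs_of_nonneg h1,
      abs_of_nonneg (mul_nonneg h2 h1)]
    nlinarith
  -- I and J
  set I : ℝ := ∫ z in B, F z with hI
  set J : ℝ := ∫ z in B, G z with hJ
  have hJnonneg : 0 ≤ J := by
    refine setIntegral_nonneg hBmeas fun z hz => ?_
    exact mul_nonneg (hrpow_nonneg z) (hFnonneg z hz)
  -- the difference integrand
  set D : ℂ → ℝ := fun z => (1 - ‖z‖ ^ p) * F z with hD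
  have hDint : IntegrableOn D B := by
    have : D = fun z => F z - G z := by
      funext z; simp only [hD, hG]; ring
    rw [this]
    exact hf₀mem.sub hGint
  have hDnonneg : (0:ℂ → ℝ) ≤ᵐ[volume.restrict B] D := by
    filter_upwards [haeB] with z hz
    exact mul_nonneg (by linarith [hrpow_lt_one z hz]) (hFnonneg z hz)
  -- positivity of ∫ D : support of w within B, minus zero set of f₀
  have hZ : volume ({z | f₀ z = 0} ∩ B) = 0 :=
    korenblum_aux_zero_set_null f₀ hf₀ hf₀ne
  have hWpos : 0 < volume (Function.support (fun z => ENNReal.ofReal (w z)) ∩ B) := by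
    rw [← setLIntegral_pos_iff (hwm.ennreal_ofReal)]
    exact hwpos
  have hsub : Function.support (fun z => ENNReal.ofReal (w z)) ∩ B ⊆
      (Function.support D ∩ B) ∪ ({z | f₀ z = 0} ∩ B) := by
    rintro z ⟨hzw, hzB⟩
    by_cases hz0 : f₀ z = 0
    · exact Or.inr ⟨hz0, hzB⟩
    · refine Or.inl ⟨?_, hzB⟩
      have hwz : 0 < w z := by
        by_contra hle
        push_neg at hle
        exact hzw (by simp [ENNReal.ofReal_eq_zero.mpr hle])
      have h1 : 0 < 1 - ‖z‖ ^ p := by linarith [hrpow_lt_one z hzB]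
      have h2 : 0 < ‖f₀ z‖ ^ p :=
        Real.rpow_pos_of_pos (norm_pos_iff.mpr hz0) p
      have : 0 < D z := by
        simp only [hD, hF]
        positivity
      exact ne_of_gt this
  have hDsupp : 0 < volume (Function.support D ∩ B) := by
    by_contra hcon
    push_neg at hcon
    have h0 : volume (Function.support D ∩ B) = 0 := le_antisymm hcon (zero_le)
    have : volume (Function.support (fun z => ENNReal.ofReal (w z)) ∩ B) = 0 := by
      refine measure_mono_null hsub ?_
      exact le_antisymm (le_trans (measure_union_le _ _) (by rw [h0, hZ]; simp)) (zero_le)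
    rw [this] at hWpos
    exact lt_irrefl _ hWpos
  have hDpos : 0 < ∫ z in B, D z :=
    (setIntegral_pos_iff_support_of_nonneg_ae hDnonneg hDint).mpr hDsupp
  have hIJ : J < I := by
    have : (∫ z in B, D z) = I - J := by
      have hDeq : D = fun z => F z - G z := by
        funext z; simp only [hD, hG]; ring
      rw [hDeq, integral_sub hf₀mem hGint]
    linarith [hDpos, this ▸ hDpos]
  have hIpos : 0 < I := lt_of_le_of_lt hJnonneg hIJ
  clear_value I J
  -- choose the radius c
  set r : ℝ := (I + J) / (2 * I) with hr
  have hr0 : 0 < r := by positivity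
  have hr1 : r < 1 := by
    rw [hr, div_lt_one (by positivity)]
    linarith
  have hrI : J < r * I := by
    have hreq : r * I = (I + J) / 2 := by
      rw [hr]; field_simp
    rw [hreq]; linarith
  clear_value r
  set c : ℝ := r ^ (p⁻¹) with hc
  have hc0 : 0 < c := Real.rpow_pos_of_pos hr0 _
  have hc1 : c < 1 := Real.rpow_lt_one hr0.le hr1 (by positivity)
  have hcp : c ^ p = r := by
    rw [hc, ← Real.rpow_mul hr0.le, inv_mul_cancel₀ hp.ne', Real.rpow_one]
  clear_value c
  -- the comparison function g
  set g : ℂ → ℂ := fun z => (c : ℂ)⁻¹ * z * f₀ z with hg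
  have hgnorm : ∀ z : ℂ, ‖g z‖ ^ p * w z = (c⁻¹) ^ p * G z := by
    intro z
    have h1 : ‖g z‖ = c⁻¹ * (‖z‖ * ‖f₀ z‖) := by
      rw [hg]
      rw [norm_mul, norm_mul, norm_inv, Complex.norm_real, Real.norm_eq_abs,
        abs_of_pos hc0, mul_assoc]
    rw [h1, Real.mul_rpow (by positivity) (by positivity),
      Real.mul_rpow (norm_nonneg z) (norm_nonneg _)]
    simp only [hG, hF]; ring
  have hgdiff : DifferentiableOn ℂ g B := by
    apply DifferentiableOn.mul _ hf₀
    exact ((differentiable_const _).mul differentiable_id).differentiableOn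
  have hgint : IntegrableOn (fun z => ‖g z‖ ^ p * w z) B := by
    have : (fun z => ‖g z‖ ^ p * w z) = fun z => (c⁻¹) ^ p * G z := funext hgnorm
    rw [this]
    exact hGint.const_mul _
  have hgdom : ∀ z : ℂ, c ≤ ‖z‖ → ‖z‖ < 1 → ‖f₀ z‖ ≤ ‖g z‖ := by
    intro z hcz hz1
    have h1 : ‖g z‖ = c⁻¹ * (‖z‖ * ‖f₀ z‖) := by
      rw [hg]
      rw [norm_mul, norm_mul, norm_inv, Complex.norm_real, Real.norm_eq_abs,
        abs_of_pos hc0, mul_assoc]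
    rw [h1]
    have h2 : 1 ≤ c⁻¹ * ‖z‖ := by
      rw [← inv_mul_cancel₀ (ne_of_gt hc0)]
      exact mul_le_mul_of_nonneg_left hcz (by positivity)
    calc ‖f₀ z‖ = 1 * ‖f₀ z‖ := (one_mul _).symm
      _ ≤ (c⁻¹ * ‖z‖) * ‖f₀ z‖ := mul_le_mul_of_nonneg_right h2 (norm_nonneg _)
      _ = c⁻¹ * (‖z‖ * ‖f₀ z‖) := by ring
  -- apply the domination hypothesis
  have hkey := hdom c ⟨hc0, hc1⟩ f₀ g hf₀ hgdiff hf₀mem hgint hgdom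
  have heval : (∫ z in B, ‖g z‖ ^ p * w z) = (c⁻¹) ^ p * J := by
    have : (fun z => ‖g z‖ ^ p * w z) = fun z => (c⁻¹) ^ p * G z := funext hgnorm
    rw [this, integral_const_mul, hJ]
  have hcinv : (c⁻¹) ^ p = r⁻¹ := by
    rw [Real.inv_rpow hc0.le, hcp]
  have hfinal : (c⁻¹) ^ p * J < I := by
    rw [hcinv]
    rw [inv_mul_lt_iff₀ hr0]
    exact hrI
  rw [heval] at hkey
  have hkey' : I ≤ (c⁻¹) ^ p * J := by rw [hI]; exact hkey
  exact absurd hkey' (not_le.mpr hfinal)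
end

section
/- Let 0 < p < 1 and let w : (0,1) → [0,∞) be measurable with ∫_0^1 2r w(r) dr < ∞ and liminf_{r→0⁺} w(r) > 0. Then for every c ∈ (0,1) there exist analytic functions f, g on the unit disk with |f(z)| ≤ |g(z)| for c ≤ |z| < 1 but ∫_0^1 2r w(r) M_p^p(r; f) dr > ∫_0^1 2r w(r) M_p^p(r; g) dr, where M_p^p(r;h) = (1/2π)∫_0^{2π}|h(re^{iθ})|^p dθ. Hence the Korenblum domination principle fails for A^p_w. -/
open MeasureTheory Set Filter Real Complex

lemma korenblum_meanval (p : ℝ) (hp0 : 0 < p) (n : ℕ) (hn : n ≠ 0) (A B : ℝ) (hA : 0 < A)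
    (hB : 0 ≤ B) (hBA : B < A) :
    2 * Real.pi * A ^ p ≤
      ∫ θ in (0:ℝ)..(2*Real.pi), ‖(A:ℂ) + (B:ℂ) * Complex.exp (Complex.I * θ) ^ n‖ ^ p := by
  set F : ℂ → ℂ := fun z => Complex.exp ((p:ℂ) * Complex.log ((A:ℂ) + (B:ℂ) * z ^ n)) with hF
  have hre : ∀ z : ℂ, ‖z‖ ≤ 1 → 0 < ((A:ℂ) + (B:ℂ) * z ^ n).re := by
    intro z hz
    have h1 : |((B:ℂ) * z ^ n).re| ≤ B := by
      calc |((B:ℂ) * z ^ n).re| ≤ ‖(B:ℂ) * z ^ n‖ := Complex.abs_re_le_norm _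
        _ = B * ‖z‖ ^ n := by
            rw [norm_mul, norm_pow, Complex.norm_real, Real.norm_of_nonneg hB]
        _ ≤ B * 1 := by
            have h4 : ‖z‖ ^ n ≤ 1 := pow_le_one₀ (norm_nonneg z) hz
            nlinarith [h4, hB]
        _ = B := by ring
    have h5 : ((A:ℂ) + (B:ℂ) * z ^ n).re = A + ((B:ℂ) * z ^ n).re := by simp
    rw [h5]
    cases abs_le.mp h1 with
    | intro h2 h3 => linarith
  have hne0 : ∀ z : ℂ, ‖z‖ ≤ 1 → ((A:ℂ) + (B:ℂ) * z ^ n) ≠ 0 := by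
    intro z hz h
    have := hre z hz
    rw [h] at this; simp at this
  have hmem : ∀ z : ℂ, ‖z‖ ≤ 1 → ((A:ℂ) + (B:ℂ) * z ^ n) ∈ Complex.slitPlane := by
    intro z hz; exact Complex.mem_slitPlane_iff.mpr (Or.inl (hre z hz))
  have hdiff : ∀ z ∈ Metric.closedBall (0:ℂ) 1, DifferentiableAt ℂ F z := by
    intro z hz
    rw [Metric.mem_closedBall, dist_zero_right] at hz
    have h1 : DifferentiableAt ℂ (fun z : ℂ => (A:ℂ) + (B:ℂ) * z ^ n) z := by fun_prop
    have h2 : DifferentiableAt ℂ Complex.log ((A:ℂ) + (B:ℂ) * z ^ n) :=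
      Complex.differentiableAt_log (hmem z hz)
    exact (((h2.comp z h1).const_mul (p:ℂ)).cexp)
  have hdc : DiffContOnCl ℂ F (Metric.ball (0:ℂ) 1) := by
    constructor
    · exact fun z hz => (hdiff z (Metric.ball_subset_closedBall hz)).differentiableWithinAt
    · rw [closure_ball (0:ℂ) one_ne_zero]
      exact fun z hz => (hdiff z hz).continuousAt.continuousWithinAt
  have hc := hdc.circleIntegral_sub_inv_smul (w := 0) (by simp)
  rw [circleIntegral] at hc
  have hz1 : ∀ θ : ℝ, ‖Complex.exp (Complex.I * θ)‖ = 1 := by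
    intro θ
    rw [mul_comm]
    exact Complex.norm_exp_ofReal_mul_I θ
  have hint : ∀ θ : ℝ,
      deriv (circleMap 0 1) θ • ((circleMap 0 1 θ - 0)⁻¹ • F (circleMap 0 1 θ))
        = Complex.I * F (Complex.exp (Complex.I * θ)) := by
    intro θ
    rw [deriv_circleMap, circleMap_zero]
    have hne : Complex.exp ((θ:ℂ) * Complex.I) ≠ 0 := Complex.exp_ne_zero _
    rw [mul_comm (θ:ℂ) Complex.I]
    simp only [smul_eq_mul, one_mul, sub_zero, Complex.ofReal_one]
    field_simp
  rw [intervalIntegral.integral_congr (fun θ _ => hint θ),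
    intervalIntegral.integral_const_mul] at hc
  have hF0 : (∫ θ in (0:ℝ)..(2*Real.pi), F (Complex.exp (Complex.I * θ)))
      = 2 * Real.pi * F 0 := by
    apply mul_left_cancel₀ Complex.I_ne_zero
    rw [smul_eq_mul] at hc
    rw [hc]; ring
  have hF0v : ‖F 0‖ = A ^ p := by
    have h0 : (0:ℂ) ^ n = 0 := zero_pow hn
    have h6 : F 0 = Complex.exp ((p:ℂ) * Complex.log (A:ℂ)) := by
      rw [hF]; simp [h0]
    rw [h6, ← Complex.ofReal_log hA.le, ← Complex.ofReal_mul,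
      Complex.norm_exp, Complex.ofReal_re, Real.rpow_def_of_pos hA, mul_comm]
  have hnormF : ∀ θ : ℝ, ‖F (Complex.exp (Complex.I * θ))‖
      = ‖(A:ℂ) + (B:ℂ) * Complex.exp (Complex.I * θ) ^ n‖ ^ p := by
    intro θ
    set ζ := (A:ℂ) + (B:ℂ) * Complex.exp (Complex.I * θ) ^ n with hζ
    have hζne : ζ ≠ 0 := hne0 _ (le_of_eq (hz1 θ))
    have h7 : ‖F (Complex.exp (Complex.I * θ))‖ = Real.exp (((p:ℂ) * Complex.log ζ).re) := by
      rw [hF]; exact Complex.norm_exp _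
    rw [h7]
    have h8 : ((p:ℂ) * Complex.log ζ).re = p * Real.log ‖ζ‖ := by
      rw [Complex.mul_re]
      simp [Complex.log_re, Complex.log_im]
    rw [h8]
    rw [Real.rpow_def_of_pos (norm_pos_iff.mpr hζne), mul_comm]
  calc 2 * Real.pi * A ^ p = ‖(2 * Real.pi : ℂ) * F 0‖ := by
        rw [norm_mul]
        rw [hF0v]
        simp [_root_.abs_of_nonneg Real.pi_nonneg]
    _ = ‖∫ θ in (0:ℝ)..(2*Real.pi), F (Complex.exp (Complex.I * θ))‖ := by
        rw [hF0]
    _ ≤ ∫ θ in (0:ℝ)..(2*Real.pi), ‖F (Complex.exp (Complex.I * θ))‖ :=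
        intervalIntegral.norm_integral_le_integral_norm Real.two_pi_pos.le
    _ = _ := intervalIntegral.integral_congr (fun θ _ => hnormF θ)

lemma korenblum_swap_norm (A B : ℝ) (n : ℕ) (θ : ℝ) :
    ‖(A:ℂ) + (B:ℂ) * Complex.exp (Complex.I * θ) ^ n‖
      = ‖(B:ℂ) + (A:ℂ) * Complex.exp (Complex.I * θ) ^ n‖ := by
  set z := Complex.exp (Complex.I * θ) with hzdef
  have hz : ‖z‖ = 1 := by rw [hzdef, mul_comm]; exact Complex.norm_exp_ofReal_mul_I θ
  have h1 : (starRingEnd ℂ) z * z = 1 := by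
    rw [mul_comm, Complex.mul_conj]
    rw [Complex.normSq_eq_norm_sq, hz]
    norm_num
  have key : ((starRingEnd ℂ) ((A:ℂ) + (B:ℂ) * z ^ n)) * z ^ n = (B:ℂ) + (A:ℂ) * z ^ n := by
    rw [map_add, map_mul, map_pow, Complex.conj_ofReal, Complex.conj_ofReal]
    calc ((A:ℂ) + (B:ℂ) * (starRingEnd ℂ) z ^ n) * z ^ n
        = (A:ℂ) * z ^ n + (B:ℂ) * ((starRingEnd ℂ) z * z) ^ n := by ring
      _ = (B:ℂ) + (A:ℂ) * z ^ n := by rw [h1]; ring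
  calc ‖(A:ℂ) + (B:ℂ) * z ^ n‖
      = ‖((starRingEnd ℂ) ((A:ℂ) + (B:ℂ) * z ^ n)) * z ^ n‖ := by
        rw [norm_mul, norm_pow, hz, RCLike.norm_conj]; ring
    _ = ‖(B:ℂ) + (A:ℂ) * z ^ n‖ := by rw [key]

lemma korenblum_Mg_eq (p : ℝ) (n : ℕ) (r : ℝ) (hr : 0 ≤ r) :
    (∫ θ in (0:ℝ)..(2*Real.pi), ‖((r:ℂ) * Complex.exp (Complex.I * θ)) ^ n‖ ^ p)
      = 2 * Real.pi * (r ^ n) ^ p := by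
  have h : ∀ θ : ℝ, ‖((r:ℂ) * Complex.exp (Complex.I * θ)) ^ n‖ ^ p = (r ^ n) ^ p := by
    intro θ
    have h1 : ‖Complex.exp (Complex.I * θ)‖ = 1 := by
      rw [mul_comm]; exact Complex.norm_exp_ofReal_mul_I θ
    rw [norm_pow, norm_mul, Complex.norm_real, Real.norm_of_nonneg hr, h1, mul_one]
  rw [intervalIntegral.integral_congr (fun θ _ => h θ), intervalIntegral.integral_const,
    smul_eq_mul, sub_zero]

lemma korenblum_Mf_lower (p : ℝ) (hp0 : 0 < p) (n : ℕ) (hn : n ≠ 0) (a ε r : ℝ) (ha : 0 < a)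
    (hε : 0 < ε) (hr : 0 < r) (hne : r ≠ ε) :
    2 * Real.pi * (a ^ p * ((max r ε) ^ n) ^ p) ≤
      ∫ θ in (0:ℝ)..(2*Real.pi),
        ‖(a:ℂ) * (((r:ℂ) * Complex.exp (Complex.I * θ)) ^ n + ((ε:ℝ):ℂ) ^ n)‖ ^ p := by
  have hpt : ∀ θ : ℝ, ‖(a:ℂ) * (((r:ℂ) * Complex.exp (Complex.I * θ)) ^ n + ((ε:ℝ):ℂ) ^ n)‖ ^ p
      = a ^ p * ‖((ε^n : ℝ):ℂ) + ((r^n : ℝ):ℂ) * Complex.exp (Complex.I * θ) ^ n‖ ^ p := by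
    intro θ
    have h2 : ((r:ℂ) * Complex.exp (Complex.I * θ)) ^ n + ((ε:ℝ):ℂ) ^ n
        = ((ε^n : ℝ):ℂ) + ((r^n : ℝ):ℂ) * Complex.exp (Complex.I * θ) ^ n := by
      push_cast; ring
    rw [h2, norm_mul, Complex.norm_real, Real.norm_of_nonneg ha.le,
      Real.mul_rpow ha.le (norm_nonneg _)]
  rw [intervalIntegral.integral_congr (fun θ _ => hpt θ), intervalIntegral.integral_const_mul]
  have hap : (0:ℝ) ≤ a ^ p := Real.rpow_nonneg ha.le p
  rcases lt_or_gt_of_ne hne with h | h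
  · have hmax : max r ε = ε := max_eq_right h.le
    have hmv := korenblum_meanval p hp0 n hn (ε^n) (r^n) (pow_pos hε n) (pow_nonneg hr.le n)
      (pow_lt_pow_left₀ h hr.le hn)
    calc 2 * Real.pi * (a ^ p * ((max r ε) ^ n) ^ p) = a ^ p * (2 * Real.pi * (ε^n) ^ p) := by
          rw [hmax]; ring
      _ ≤ _ := mul_le_mul_of_nonneg_left hmv hap
  · have hmax : max r ε = r := max_eq_left h.le
    have hsw : ∀ θ : ℝ, ‖((ε^n : ℝ):ℂ) + ((r^n : ℝ):ℂ) * Complex.exp (Complex.I * θ) ^ n‖ ^ p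
        = ‖((r^n : ℝ):ℂ) + ((ε^n : ℝ):ℂ) * Complex.exp (Complex.I * θ) ^ n‖ ^ p := by
      intro θ; rw [korenblum_swap_norm]
    rw [intervalIntegral.integral_congr (fun θ _ => hsw θ)]
    have hmv := korenblum_meanval p hp0 n hn (r^n) (ε^n) (pow_pos hr n) (pow_nonneg hε.le n)
      (pow_lt_pow_left₀ h hε.le hn)
    calc 2 * Real.pi * (a ^ p * ((max r ε) ^ n) ^ p) = a ^ p * (2 * Real.pi * (r^n) ^ p) := by
          rw [hmax]; ring
      _ ≤ _ := mul_le_mul_of_nonneg_left hmv hap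

set_option maxHeartbeats 1000000 in
theorem korenblum_fails_small_p (p : ℝ) (hp0 : 0 < p) (hp1 : p < 1)
    (w : ℝ → ℝ) (hwm : Measurable w) (hw0 : ∀ r ∈ Set.Ioo (0:ℝ) 1, 0 ≤ w r)
    (hwi : IntegrableOn (fun r => 2 * r * w r) (Set.Ioo (0:ℝ) 1))
    (hliminf : 0 < Filter.liminf w (nhdsWithin 0 (Set.Ioi 0))) :
    ∀ c ∈ Set.Ioo (0:ℝ) 1, ∃ f g : ℂ → ℂ,
      DifferentiableOn ℂ f (Metric.ball (0:ℂ) 1) ∧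
      DifferentiableOn ℂ g (Metric.ball (0:ℂ) 1) ∧
      (∀ z : ℂ, c ≤ ‖z‖ → ‖z‖ < 1 → ‖f z‖ ≤ ‖g z‖) ∧
      (∫ r in Set.Ioo (0:ℝ) 1, 2 * r * w r *
          ((1 / (2 * Real.pi)) * ∫ θ in (0:ℝ)..(2 * Real.pi),
            ‖g ((r : ℂ) * Complex.exp (Complex.I * θ))‖ ^ p)) <
        ∫ r in Set.Ioo (0:ℝ) 1, 2 * r * w r *
          ((1 / (2 * Real.pi)) * ∫ θ in (0:ℝ)..(2 * Real.pi),
            ‖f ((r : ℂ) * Complex.exp (Complex.I * θ))‖ ^ p) := by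
  intro c hc
  obtain ⟨hc0, hc1⟩ := hc
  have h1p : 0 < 1 - p := by linarith
  -- choose m and a radius where w ≥ m
  set m : ℝ := Filter.liminf w (nhdsWithin 0 (Set.Ioi 0)) / 2 with hmdef
  have hm : 0 < m := by positivity
  have hev1 : ∀ᶠ r in nhdsWithin (0:ℝ) (Set.Ioi 0), r ∈ Set.Ioo (0:ℝ) 1 :=
    Ioo_mem_nhdsGT_of_mem (by constructor <;> norm_num)
  have hbdd : Filter.IsBoundedUnder (· ≥ ·) (nhdsWithin (0:ℝ) (Set.Ioi 0)) w :=
    Filter.isBoundedUnder_of_eventually_ge (a := (0:ℝ)) (hev1.mono fun r hr => hw0 r hr)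
  have hev2 : ∀ᶠ r in nhdsWithin (0:ℝ) (Set.Ioi 0), m < w r :=
    Filter.eventually_lt_of_lt_liminf (by rw [hmdef]; linarith) hbdd
  obtain ⟨u, hu, hsub⟩ := mem_nhdsGT_iff_exists_Ioo_subset.mp hev2
  rw [Set.mem_Ioi] at hu
  set r₀ : ℝ := min u 1 with hr₀def
  have hr₀ : 0 < r₀ := lt_min hu one_pos
  have hwm' : ∀ r ∈ Set.Ioo (0:ℝ) r₀, m ≤ w r := by
    intro r hr
    exact (hsub ⟨hr.1, lt_of_lt_of_le hr.2 (min_le_left _ _)⟩).le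
  -- choose n
  set n : ℕ := ⌈(3:ℝ)/(1-p)⌉₊ with hndef
  have hn3 : (3:ℝ)/(1-p) ≤ n := Nat.le_ceil _
  have hn3' : (3:ℝ) ≤ n := le_trans (by rw [le_div_iff₀ h1p]; nlinarith) hn3
  have hn0 : n ≠ 0 := by
    intro h
    rw [h] at hn3'; norm_num at hn3'
  have hn1 : 1 < n := by
    by_contra h
    push_neg at h
    interval_cases n <;> norm_num at hn3'
  have hnp2 : 2 < (n:ℝ) * (1-p) := by
    have := mul_le_mul_of_nonneg_right hn3 h1p.le
    rw [div_mul_cancel₀] at this <;> nlinarith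
  set q : ℝ := (n:ℝ) * (1-p) - 2 with hqdef
  have hq : 0 < q := by rw [hqdef]; linarith
  -- constants
  set W : ℝ := ∫ r in Set.Ioo (0:ℝ) 1, 2 * r * w r with hWdef
  have hW0 : 0 ≤ W := by
    apply setIntegral_nonneg measurableSet_Ioo
    intro r hr
    have := hw0 r hr
    nlinarith [hr.1]
  set κ : ℝ := (1/2:ℝ)^p - ((1/2:ℝ)^n)^p with hκdef
  have hκ : 0 < κ := by
    rw [hκdef, sub_pos]
    apply Real.rpow_lt_rpow (by positivity) _ hp0
    calc ((1:ℝ)/2)^n ≤ (1/2)^2 := by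
          apply pow_le_pow_of_le_one (by norm_num) (by norm_num) hn1
      _ < 1/2 := by norm_num
  set ρ : ℝ := c^n * m * κ / (4*(W+1)) with hρdef
  have hρ : 0 < ρ := by
    apply div_pos _ (by linarith)
    have : (0:ℝ) < c^n := pow_pos hc0 n
    positivity
  set y : ℝ := (min ρ 1) ^ (q⁻¹) with hydef
  have hy : 0 < y := Real.rpow_pos_of_pos (lt_min hρ one_pos) _
  set ε : ℝ := min (min c r₀) (min (1/2) (y/2)) with hεdef
  have hε0 : 0 < ε := by
    apply lt_min (lt_min hc0 hr₀) (lt_min (by norm_num) (by positivity))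
  have hεc : ε ≤ c := le_trans (min_le_left _ _) (min_le_left _ _)
  have hεr₀ : ε ≤ r₀ := le_trans (min_le_left _ _) (min_le_right _ _)
  have hεh : ε ≤ 1/2 := le_trans (min_le_right _ _) (min_le_left _ _)
  have hεy : ε ≤ y/2 := le_trans (min_le_right _ _) (min_le_right _ _)
  have hε1 : ε < 1 := lt_of_le_of_lt hεh (by norm_num)
  have hεq : ε ^ q < ρ := by
    have h1 : ε ^ q ≤ (y/2)^q := Real.rpow_le_rpow hε0.le hεy hq.le
    have h2 : (y/2)^q < y^q := Real.rpow_lt_rpow (by positivity) (by linarith) hq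
    have h3 : y ^ q = min ρ 1 := Real.rpow_inv_rpow (lt_min hρ one_pos).le hq.ne'
    calc ε ^ q ≤ (y/2)^q := h1
      _ < y ^ q := h2
      _ = min ρ 1 := h3
      _ ≤ ρ := min_le_left _ _
  -- the constant a and the functions
  have hC : (0:ℝ) < c^n := pow_pos hc0 n
  have hE : (0:ℝ) < ε^n := pow_pos hε0 n
  have hEC : ε^n ≤ c^n := pow_le_pow_left₀ hε0.le hεc n
  set a : ℝ := c^n / (c^n + ε^n) with hadef
  have ha0 : 0 < a := by positivity
  have ha1 : a ≤ 1 := by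
    rw [hadef, div_le_one (by positivity)]; linarith
  have hhalf : (1/2:ℝ) ≤ a := by
    rw [hadef, le_div_iff₀ (by positivity)]; linarith
  have h1a : 1 - a ≤ ε^n / c^n := by
    have h4 : 1 - a = ε^n / (c^n + ε^n) := by
      rw [hadef]; field_simp; ring
    rw [h4]
    apply div_le_div_of_nonneg_left hE.le hC; linarith
  set f : ℂ → ℂ := fun z => (a:ℂ) * (z ^ n + ((ε:ℝ):ℂ) ^ n) with hfdef
  set g : ℂ → ℂ := fun z => z ^ n with hgdef
  clear_value n m r₀ q W κ ρ y ε a f g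
  refine ⟨f, g, ?_, ?_, ?_, ?_⟩
  · rw [hfdef]
    apply DifferentiableOn.const_mul
    apply DifferentiableOn.add_const
    exact (differentiable_pow n).differentiableOn
  · rw [hgdef]
    exact (differentiable_pow n).differentiableOn
  · -- norm comparison on the annulus
    intro z hz hz1
    have hgz : ‖g z‖ = ‖z‖ ^ n := by rw [hgdef]; exact norm_pow z n
    have hfz : ‖f z‖ ≤ a * (‖z‖^n + ε^n) := by
      simp only [hfdef]
      rw [norm_mul, Complex.norm_real, Real.norm_of_nonneg ha0.le]
      apply mul_le_mul_of_nonneg_left _ ha0.le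
      calc ‖z ^ n + ((ε:ℝ):ℂ) ^ n‖ ≤ ‖z ^ n‖ + ‖((ε:ℝ):ℂ) ^ n‖ := norm_add_le _ _
        _ = ‖z‖^n + ε^n := by
            rw [norm_pow, norm_pow, Complex.norm_real, Real.norm_of_nonneg hε0.le]
    have hcz : c^n ≤ ‖z‖^n := pow_le_pow_left₀ hc0.le hz n
    rw [hgz]
    refine le_trans hfz ?_
    have key2 : c^n * (‖z‖^n + ε^n) ≤ ‖z‖^n * (c^n + ε^n) := by
      nlinarith [mul_le_mul_of_nonneg_right hcz hE.le]
    have hpos : (0:ℝ) < c^n + ε^n := by linarith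
    rw [hadef, div_mul_eq_mul_div, div_le_iff₀ hpos]
    linarith [key2]
  · -- the integral inequality
    have h2π : (0:ℝ) < 2 * Real.pi := Real.two_pi_pos
    have hrpow_cont : Continuous fun x : ℝ => x ^ p :=
      continuous_iff_continuousAt.mpr fun x => Real.continuousAt_rpow_const x p (Or.inr hp0.le)
    -- LHS equals the simple integral
    have hLHS : (∫ r in Set.Ioo (0:ℝ) 1, 2 * r * w r *
        ((1 / (2 * Real.pi)) * ∫ θ in (0:ℝ)..(2 * Real.pi),
          ‖g ((r : ℂ) * Complex.exp (Complex.I * θ))‖ ^ p))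
        = ∫ r in Set.Ioo (0:ℝ) 1, 2 * r * w r * (r^n)^p := by
      apply setIntegral_congr_fun measurableSet_Ioo
      intro r hr
      simp only [hgdef]
      rw [korenblum_Mg_eq p n r hr.1.le]
      have : (1 / (2*Real.pi)) * (2*Real.pi*(r^n)^p) = (r^n)^p := by
        field_simp
      rw [this]
    -- integrability of the g-side integrand
    have hmeas_rnp : Measurable fun r : ℝ => (r^n)^p :=
      (hrpow_cont.comp (continuous_pow n)).measurable
    have hg_int : IntegrableOn (fun r => 2 * r * w r * (r^n)^p) (Set.Ioo (0:ℝ) 1) := by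
      apply Integrable.mono hwi
      · exact (((measurable_const.mul measurable_id).mul hwm).mul hmeas_rnp).aestronglyMeasurable
      · rw [ae_restrict_iff' measurableSet_Ioo]
        apply ae_of_all
        intro r hr
        rw [Real.norm_eq_abs, Real.norm_eq_abs, abs_mul]
        have h6 : |(r^n)^p| ≤ 1 := by
          rw [_root_.abs_of_nonneg (Real.rpow_nonneg (pow_nonneg hr.1.le n) p)]
          exact Real.rpow_le_one (pow_nonneg hr.1.le n) (pow_le_one₀ hr.1.le hr.2.le) hp0.le
        exact mul_le_of_le_one_right (abs_nonneg _) h6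
    -- integrability of the ψ integrand
    have hψcont : Continuous fun r : ℝ => a^p * ((max r ε)^n)^p :=
      continuous_const.mul (hrpow_cont.comp ((continuous_id.max continuous_const).pow n))
    have hψ_fac_le : ∀ r ∈ Set.Ioo (0:ℝ) 1, a^p * ((max r ε)^n)^p ≤ 1 := by
      intro r hr
      have h7 : a^p ≤ 1 := Real.rpow_le_one ha0.le ha1 hp0.le
      have h8 : ((max r ε)^n)^p ≤ 1 := by
        apply Real.rpow_le_one (pow_nonneg (le_trans hε0.le (le_max_right r ε)) n) _ hp0.le
        apply pow_le_one₀ (le_trans hε0.le (le_max_right r ε))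
        exact max_le hr.2.le (by linarith)
      have h9 : (0:ℝ) ≤ ((max r ε)^n)^p :=
        Real.rpow_nonneg (pow_nonneg (le_trans hε0.le (le_max_right r ε)) n) p
      nlinarith [Real.rpow_nonneg ha0.le p]
    have hψ_fac_nonneg : ∀ r : ℝ, 0 ≤ a^p * ((max r ε)^n)^p := by
      intro r
      exact mul_nonneg (Real.rpow_nonneg ha0.le p)
        (Real.rpow_nonneg (pow_nonneg (le_trans hε0.le (le_max_right r ε)) n) p)
    have hψ_int : IntegrableOn (fun r => 2 * r * w r * (a^p * ((max r ε)^n)^p))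
        (Set.Ioo (0:ℝ) 1) := by
      apply Integrable.mono hwi
      · exact (((measurable_const.mul measurable_id).mul hwm).mul
          hψcont.measurable).aestronglyMeasurable
      · rw [ae_restrict_iff' measurableSet_Ioo]
        apply ae_of_all
        intro r hr
        rw [Real.norm_eq_abs, Real.norm_eq_abs, abs_mul]
        have h6 : |a^p * ((max r ε)^n)^p| ≤ 1 := by
          rw [_root_.abs_of_nonneg (hψ_fac_nonneg r)]
          exact hψ_fac_le r hr
        exact mul_le_of_le_one_right (abs_nonneg _) h6
    -- continuity / bounds of Mf
    have hfc : Continuous (Function.uncurry fun (r θ : ℝ) =>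
        ‖f ((r:ℂ) * Complex.exp (Complex.I * θ))‖ ^ p) := by
      apply hrpow_cont.comp
      apply Continuous.norm
      simp only [hfdef]
      fun_prop
    have hMf_cont : Continuous fun r : ℝ => ∫ θ in (0:ℝ)..(2 * Real.pi),
        ‖f ((r:ℂ) * Complex.exp (Complex.I * θ))‖ ^ p :=
      intervalIntegral.continuous_parametric_intervalIntegral_of_continuous' hfc 0 (2*Real.pi)
    have hMf_nonneg : ∀ r : ℝ, 0 ≤ ∫ θ in (0:ℝ)..(2 * Real.pi),
        ‖f ((r:ℂ) * Complex.exp (Complex.I * θ))‖ ^ p := fun r =>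
      intervalIntegral.integral_nonneg h2π.le (fun θ _ => Real.rpow_nonneg (norm_nonneg _) p)
    have hMf_le : ∀ r ∈ Set.Ioo (0:ℝ) 1, (∫ θ in (0:ℝ)..(2 * Real.pi),
        ‖f ((r:ℂ) * Complex.exp (Complex.I * θ))‖ ^ p) ≤ 2 * Real.pi * (2:ℝ)^p := by
      intro r hr
      have hci : Continuous fun θ : ℝ => ‖f ((r:ℂ) * Complex.exp (Complex.I * θ))‖ ^ p := by
        apply hrpow_cont.comp
        apply Continuous.norm
        simp only [hfdef]
        fun_prop
      calc (∫ θ in (0:ℝ)..(2 * Real.pi), ‖f ((r:ℂ) * Complex.exp (Complex.I * θ))‖ ^ p)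
          ≤ ∫ _θ in (0:ℝ)..(2 * Real.pi), (2:ℝ)^p := by
            apply intervalIntegral.integral_mono_on h2π.le (hci.intervalIntegrable _ _)
              intervalIntegrable_const
            intro θ _
            apply Real.rpow_le_rpow (norm_nonneg _) _ hp0.le
            simp only [hfdef]
            rw [norm_mul, Complex.norm_real, Real.norm_of_nonneg ha0.le]
            have hb1 : ‖((r:ℂ) * Complex.exp (Complex.I * θ)) ^ n + ((ε:ℝ):ℂ) ^ n‖ ≤ 2 := by
              have he1 : ‖Complex.exp (Complex.I * θ)‖ = 1 := by
                rw [mul_comm]; exact Complex.norm_exp_ofReal_mul_I θ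
              calc ‖((r:ℂ) * Complex.exp (Complex.I * θ)) ^ n + ((ε:ℝ):ℂ) ^ n‖
                  ≤ ‖((r:ℂ) * Complex.exp (Complex.I * θ)) ^ n‖ + ‖((ε:ℝ):ℂ) ^ n‖ :=
                    norm_add_le _ _
                _ = r^n + ε^n := by
                    rw [norm_pow, norm_pow, norm_mul, Complex.norm_real,
                      Real.norm_of_nonneg hr.1.le, he1, mul_one, Complex.norm_real,
                      Real.norm_of_nonneg hε0.le]
                _ ≤ 1 + 1 := by
                    have := pow_le_one₀ hr.1.le hr.2.le (n := n)
                    have := pow_le_one₀ hε0.le (by linarith : ε ≤ 1) (n := n)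
                    linarith
                _ = 2 := by norm_num
            nlinarith [norm_nonneg (((r:ℂ) * Complex.exp (Complex.I * θ)) ^ n + ((ε:ℝ):ℂ) ^ n)]
        _ = 2 * Real.pi * (2:ℝ)^p := by
            rw [intervalIntegral.integral_const, smul_eq_mul, sub_zero]
    -- integrability of the f-side integrand
    have hIf_int : IntegrableOn (fun r => 2 * r * w r *
        ((1 / (2 * Real.pi)) * ∫ θ in (0:ℝ)..(2 * Real.pi),
          ‖f ((r:ℂ) * Complex.exp (Complex.I * θ))‖ ^ p)) (Set.Ioo (0:ℝ) 1) := by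
      apply Integrable.mono (hwi.const_mul ((2:ℝ)^p))
      · exact (((measurable_const.mul measurable_id).mul hwm).mul
          ((measurable_const.mul hMf_cont.measurable))).aestronglyMeasurable
      · rw [ae_restrict_iff' measurableSet_Ioo]
        apply ae_of_all
        intro r hr
        have h2rw : 0 ≤ 2 * r * w r := by nlinarith [hw0 r hr, hr.1]
        have hMn := hMf_nonneg r
        have hMl := hMf_le r hr
        rw [Real.norm_eq_abs, Real.norm_eq_abs]
        have hA1 : 0 ≤ 2 * r * w r * ((1 / (2 * Real.pi)) * ∫ θ in (0:ℝ)..(2 * Real.pi),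
            ‖f ((r:ℂ) * Complex.exp (Complex.I * θ))‖ ^ p) :=
          mul_nonneg h2rw (mul_nonneg (by positivity) hMn)
        have hA2 : 0 ≤ (2:ℝ)^p * (2 * r * w r) :=
          mul_nonneg (Real.rpow_nonneg (by norm_num) p) h2rw
        rw [_root_.abs_of_nonneg hA1, _root_.abs_of_nonneg hA2]
        have h10 : (1 / (2 * Real.pi)) * (∫ θ in (0:ℝ)..(2 * Real.pi),
            ‖f ((r:ℂ) * Complex.exp (Complex.I * θ))‖ ^ p) ≤ (2:ℝ)^p := by
          rw [div_mul_eq_mul_div, one_mul, div_le_iff₀ h2π]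
          linarith
        nlinarith [h2rw, h10, mul_le_mul_of_nonneg_left h10 h2rw]
    -- ψ is a lower bound for the f-side
    have hψle : (∫ r in Set.Ioo (0:ℝ) 1, 2 * r * w r * (a^p * ((max r ε)^n)^p))
        ≤ ∫ r in Set.Ioo (0:ℝ) 1, 2 * r * w r *
          ((1 / (2 * Real.pi)) * ∫ θ in (0:ℝ)..(2 * Real.pi),
            ‖f ((r:ℂ) * Complex.exp (Complex.I * θ))‖ ^ p) := by
      apply integral_mono_ae hψ_int hIf_int
      have hae_ne : ∀ᵐ r ∂(volume.restrict (Set.Ioo (0:ℝ) 1)), r ≠ ε := by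
        apply ae_restrict_of_ae
        rw [ae_iff]
        have hset : {x : ℝ | ¬ x ≠ ε} = {ε} := by ext x; simp
        rw [hset]
        exact measure_singleton ε
      filter_upwards [ae_restrict_mem measurableSet_Ioo, hae_ne] with r hr hrne
      have hMfl := korenblum_Mf_lower p hp0 n hn0 a ε r ha0 hε0 hr.1 hrne
      have hMfr : (∫ θ in (0:ℝ)..(2*Real.pi),
          ‖(a:ℂ) * (((r:ℂ) * Complex.exp (Complex.I * θ)) ^ n + ((ε:ℝ):ℂ) ^ n)‖ ^ p)
          = ∫ θ in (0:ℝ)..(2 * Real.pi), ‖f ((r:ℂ) * Complex.exp (Complex.I * θ))‖ ^ p := by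
        simp only [hfdef]
      rw [hMfr] at hMfl
      have h2rw : 0 ≤ 2 * r * w r := by nlinarith [hw0 r hr, hr.1]
      have h11 : a^p * ((max r ε)^n)^p ≤ (1 / (2 * Real.pi)) * ∫ θ in (0:ℝ)..(2 * Real.pi),
          ‖f ((r:ℂ) * Complex.exp (Complex.I * θ))‖ ^ p := by
        rw [div_mul_eq_mul_div, one_mul, le_div_iff₀ h2π]
        linarith
      exact mul_le_mul_of_nonneg_left h11 h2rw
    -- strict inequality between the simple integrals
    have hkey : (∫ r in Set.Ioo (0:ℝ) 1, 2 * r * w r * (r^n)^p)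
        < ∫ r in Set.Ioo (0:ℝ) 1, 2 * r * w r * (a^p * ((max r ε)^n)^p) := by
      have hFD_int : IntegrableOn (fun r => 2 * r * w r * (a^p * ((max r ε)^n)^p)
          - 2 * r * w r * (r^n)^p) (Set.Ioo (0:ℝ) 1) := hψ_int.sub hg_int
      rw [← sub_pos, ← integral_sub hψ_int hg_int]
      have hδ0 : (0:ℝ) < ε/2 := by linarith [hε0]
      have hδ1 : ε/2 ≤ 1 := by linarith
      have hunion : Set.Ioo (0:ℝ) 1 = Set.Ioo 0 (ε/2) ∪ Set.Ico (ε/2) 1 :=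
        (Set.Ioo_union_Ico_eq_Ioo hδ0 hδ1).symm
      have hdisj : Disjoint (Set.Ioo (0:ℝ) (ε/2)) (Set.Ico (ε/2) 1) := by
        apply Set.disjoint_left.mpr
        intro x hx1 hx2
        exact absurd hx2.1 (not_le.mpr hx1.2)
      have hsub1 : Set.Ioo (0:ℝ) (ε/2) ⊆ Set.Ioo 0 1 := Set.Ioo_subset_Ioo le_rfl hδ1
      have hsub2 : Set.Ico (ε/2) 1 ⊆ Set.Ioo 0 1 := fun x hx =>
        ⟨lt_of_lt_of_le hδ0 hx.1, hx.2⟩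
      -- lower bound on the inner piece
      have hpiece1 : m*(κ*(ε^n)^p)*(ε/2)^2 ≤ ∫ r in Set.Ioo (0:ℝ) (ε/2),
          (2 * r * w r * (a^p * ((max r ε)^n)^p) - 2 * r * w r * (r^n)^p) := by
        have heval : (∫ r in Set.Ioo (0:ℝ) (ε/2), (2*(m*(κ*(ε^n)^p)))*r)
            = m*(κ*(ε^n)^p)*(ε/2)^2 := by
          rw [← MeasureTheory.integral_Ioc_eq_integral_Ioo,
            ← intervalIntegral.integral_of_le hδ0.le,
            intervalIntegral.integral_const_mul, integral_id]
          ring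
        rw [← heval]
        apply setIntegral_mono_on ((continuous_const.mul continuous_id).integrableOn_Icc.mono_set
          Set.Ioo_subset_Icc_self) (hFD_int.mono_set hsub1) measurableSet_Ioo
        intro r hr
        show 2*(m*(κ*(ε^n)^p))*r ≤ 2*r*w r*(a^p*((max r ε)^n)^p) - 2*r*w r*(r^n)^p
        have hrr : r ∈ Set.Ioo (0:ℝ) r₀ := ⟨hr.1, lt_of_lt_of_le hr.2 (by linarith)⟩
        have hwr : m ≤ w r := hwm' r hrr
        have hmax : max r ε = ε := max_eq_right (by linarith [hr.2])
        rw [hmax]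
        have hd0 : (0:ℝ) < κ*(ε^n)^p := mul_pos hκ (Real.rpow_pos_of_pos hE p)
        have hDlow : κ*(ε^n)^p ≤ a^p*(ε^n)^p - (r^n)^p := by
          have ha_p : (1/2:ℝ)^p ≤ a^p := Real.rpow_le_rpow (by norm_num) hhalf hp0.le
          have hr_p : (r^n)^p ≤ ((1/2:ℝ)^n)^p * (ε^n)^p := by
            rw [← Real.mul_rpow (by positivity) (pow_nonneg hε0.le n)]
            apply Real.rpow_le_rpow (pow_nonneg hr.1.le n) _ hp0.le
            calc r^n ≤ (ε/2)^n := pow_le_pow_left₀ hr.1.le hr.2.le n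
              _ = (1/2)^n * ε^n := by rw [← mul_pow]; ring_nf
          have hEp : (0:ℝ) < (ε^n)^p := Real.rpow_pos_of_pos hE p
          have h12 := mul_le_mul_of_nonneg_right ha_p hEp.le
          rw [hκdef]
          linarith only [hr_p, h12]
        have hwD : m*(κ*(ε^n)^p) ≤ w r * (a^p*(ε^n)^p - (r^n)^p) :=
          mul_le_mul hwr hDlow hd0.le (le_trans hm.le hwr)
        linarith only [mul_le_mul_of_nonneg_left hwD (by linarith [hr.1] : (0:ℝ) ≤ 2*r)]
      -- lower bound on the outer piece
      have hIco_int : IntegrableOn (fun r => 2 * r * w r) (Set.Ico (ε/2) 1) :=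
        hwi.mono_set hsub2
      have hW2 : (∫ r in Set.Ico (ε/2) 1, 2 * r * w r) ≤ W := by
        rw [hWdef]
        apply setIntegral_mono_set hwi _ (HasSubset.Subset.eventuallyLE hsub2)
        rw [EventuallyLE, ae_restrict_iff' measurableSet_Ioo]
        apply ae_of_all
        intro r hr
        have h19 := hw0 r hr
        simp only [Pi.zero_apply]
        exact mul_nonneg (by linarith only [hr.1]) h19
      have hpiece2 : -(ε^n/c^n) * W ≤ ∫ r in Set.Ico (ε/2) 1,
          (2 * r * w r * (a^p * ((max r ε)^n)^p) - 2 * r * w r * (r^n)^p) := by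
        have heval2 : (∫ r in Set.Ico (ε/2) 1, (-(ε^n/c^n)) * (2 * r * w r))
            = (-(ε^n/c^n)) * ∫ r in Set.Ico (ε/2) 1, 2 * r * w r :=
          integral_const_mul _ _
        calc -(ε^n/c^n) * W
            ≤ (-(ε^n/c^n)) * ∫ r in Set.Ico (ε/2) 1, 2 * r * w r := by
              have := mul_le_mul_of_nonpos_left hW2
                (neg_nonpos_of_nonneg (div_pos hE hC).le)
              linarith only [this]
          _ = ∫ r in Set.Ico (ε/2) 1, (-(ε^n/c^n)) * (2 * r * w r) := heval2.symm
          _ ≤ _ := by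
              apply setIntegral_mono_on (hIco_int.const_mul _) (hFD_int.mono_set hsub2)
                measurableSet_Ico
              intro r hr
              show (-(ε^n/c^n))*(2*r*w r)
                ≤ 2*r*w r*(a^p*((max r ε)^n)^p) - 2*r*w r*(r^n)^p
              have hr01 : r ∈ Set.Ioo (0:ℝ) 1 := hsub2 hr
              have h2rw : (0:ℝ) ≤ 2 * r * w r :=
                mul_nonneg (by linarith only [hr01.1]) (hw0 r hr01)
              have hmaxnn : (0:ℝ) ≤ max r ε := le_trans hε0.le (le_max_right r ε)
              have hRM : (r^n)^p ≤ ((max r ε)^n)^p :=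
                Real.rpow_le_rpow (pow_nonneg hr01.1.le n)
                  (pow_le_pow_left₀ hr01.1.le (le_max_left r ε) n) hp0.le
              have hR1 : (r^n)^p ≤ 1 :=
                Real.rpow_le_one (pow_nonneg hr01.1.le n)
                  (pow_le_one₀ hr01.1.le hr01.2.le) hp0.le
              have hRnn : (0:ℝ) ≤ (r^n)^p := Real.rpow_nonneg (pow_nonneg hr01.1.le n) p
              have hap_ge : a ≤ a^p := by
                have h17 := Real.rpow_le_rpow_of_exponent_ge ha0 ha1 hp1.le
                rwa [Real.rpow_one] at h17
              have hap1 : a^p ≤ 1 := Real.rpow_le_one ha0.le ha1 hp0.le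
              have hapnn : (0:ℝ) ≤ a^p := Real.rpow_nonneg ha0.le p
              have hDge : -(ε^n/c^n) ≤ a^p*((max r ε)^n)^p - (r^n)^p := by
                have h13 := mul_le_mul_of_nonneg_left hRM hapnn
                have h15 : (1-a^p)*(r^n)^p ≤ (1-a^p)*1 :=
                  mul_le_mul_of_nonneg_left hR1 (by linarith)
                have h16 : 1-a^p ≤ ε^n/c^n := le_trans (by linarith) h1a
                linarith only [h13, h15, h16]
              linarith only [mul_le_mul_of_nonneg_left hDge h2rw]
      -- the numeric inequality from the choice of ε
      have hnum : (ε^n/c^n) * W < m*(κ*(ε^n)^p)*(ε/2)^2 := by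
        have hP : (0:ℝ) < (ε^n)^p := Real.rpow_pos_of_pos hE p
        have e1 : (ε:ℝ)^n = (ε^n)^p * ε^2 * ε^q := by
          have h18 : ((ε:ℝ)^n)^p = ε ^ ((n:ℝ)*p) := by
            rw [Real.rpow_mul hε0.le, Real.rpow_natCast]
          calc (ε:ℝ)^n = ε ^ ((n:ℝ)) := (Real.rpow_natCast ε n).symm
            _ = ε ^ ((n:ℝ)*p + ((2:ℝ) + q)) := by congr 1; rw [hqdef]; ring
            _ = ε ^ ((n:ℝ)*p) * (ε ^ (2:ℝ) * ε ^ q) := by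
                rw [Real.rpow_add hε0, Real.rpow_add hε0]
            _ = (ε^n)^p * ε^2 * ε^q := by
                rw [h18, show (2:ℝ) = ((2:ℕ):ℝ) by norm_num, Real.rpow_natCast]
                ring
        have h3 : ε^q * (4*(W+1)) < c^n * m * κ := by
          rw [hρdef] at hεq
          exact (lt_div_iff₀ (by linarith)).mp hεq
        have hq0 : (0:ℝ) < ε ^ q := Real.rpow_pos_of_pos hε0 q
        have h4 : ε^q * 4 * W < c^n*m*κ := by linarith only [h3, hq0]
        rw [div_mul_eq_mul_div, div_lt_iff₀ hC]
        have h5 : (0:ℝ) < (ε^n)^p * ε^2 := mul_pos hP (pow_pos hε0 2)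
        conv_lhs => rw [e1]
        linarith only [mul_lt_mul_of_pos_left h4 h5]
      rw [hunion, setIntegral_union hdisj measurableSet_Ico (hFD_int.mono_set hsub1)
        (hFD_int.mono_set hsub2)]
      linarith only [hpiece1, hpiece2, hnum]
    rw [hLHS]
    exact lt_of_lt_of_le hkey hψle
end

section
/- Let 0 < p < 1, c ∈ (0,1), n ≥ 1 with n(1-p) > 2, and w : (0,1) → [0,∞) integrable against 2r dr. Suppose ε ∈ (0,c) satisfies ε^{np}∫_0^ε 2r w(r) dr − ∫_0^ε 2r w(r) r^{np} dr > p(ε/c)^n ∫_0^1 2r w(r) r^{np} dr. Then ((c^n+ε^n)^p/c^{np})·∫_0^1 2r w(r) r^{np} dr < ε^{np}∫_0^ε 2r w(r) dr + ∫_ε^1 2r w(r) r^{np} dr. -/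
open MeasureTheory Set

theorem algebraic_reduction (p : ℝ) (hp0 : 0 < p) (hp1 : p < 1)
    (c : ℝ) (hc : c ∈ Set.Ioo (0:ℝ) 1) (n : ℕ) (hn : 1 ≤ n)
    (hnp : 2 < (n : ℝ) * (1 - p))
    (w : ℝ → ℝ) (hwm : Measurable w) (hw0 : ∀ r ∈ Set.Ioo (0:ℝ) 1, 0 ≤ w r)
    (hwi : IntegrableOn (fun r => 2 * r * w r) (Set.Ioo (0:ℝ) 1))
    (ε : ℝ) (hε : ε ∈ Set.Ioo (0:ℝ) c)
    (hkey : p * (ε / c) ^ n * ∫ r in Set.Ioo (0:ℝ) 1, 2 * r * w r * r ^ ((n : ℝ) * p) <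
      ε ^ ((n : ℝ) * p) * (∫ r in Set.Ioo (0:ℝ) ε, 2 * r * w r) -
        ∫ r in Set.Ioo (0:ℝ) ε, 2 * r * w r * r ^ ((n : ℝ) * p)) :
    ((c ^ n + ε ^ n) ^ p / c ^ ((n : ℝ) * p)) *
        ∫ r in Set.Ioo (0:ℝ) 1, 2 * r * w r * r ^ ((n : ℝ) * p) <
      ε ^ ((n : ℝ) * p) * (∫ r in Set.Ioo (0:ℝ) ε, 2 * r * w r) +
        ∫ r in Set.Ioo ε 1, 2 * r * w r * r ^ ((n : ℝ) * p) := by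
  obtain ⟨hc0, hc1⟩ := hc
  obtain ⟨hε0, hεc⟩ := hε
  have hε1 : ε < 1 := hεc.trans hc1
  set f : ℝ → ℝ := fun r => 2 * r * w r * r ^ ((n : ℝ) * p) with hf
  -- f is integrable on Ioo 0 1
  have hnp0 : (0:ℝ) ≤ (n : ℝ) * p := by positivity
  have hfm : Measurable f :=
    ((measurable_const.mul measurable_id).mul hwm).mul
      (Real.continuous_rpow_const hnp0).measurable
  have hfi : IntegrableOn f (Set.Ioo (0:ℝ) 1) := by
    refine hwi.mono' hfm.aestronglyMeasurable.restrict ?_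
    filter_upwards [ae_restrict_mem measurableSet_Ioo] with r hr
    have hr0 : 0 < r := hr.1
    have hw := hw0 r hr
    have hrp0 : 0 ≤ r ^ ((n : ℝ) * p) := Real.rpow_nonneg hr0.le _
    have hrp1 : r ^ ((n : ℝ) * p) ≤ 1 :=
      Real.rpow_le_one hr0.le hr.2.le (by positivity)
    have h1 : 0 ≤ 2 * r * w r := by positivity
    rw [Real.norm_eq_abs, abs_of_nonneg (by positivity)]
    calc 2 * r * w r * r ^ ((n : ℝ) * p) ≤ 2 * r * w r * 1 :=
          mul_le_mul_of_nonneg_left hrp1 h1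
      _ = 2 * r * w r := by ring
  -- split the integral
  have hsplit : ∫ r in Set.Ioo (0:ℝ) 1, f r =
      (∫ r in Set.Ioo (0:ℝ) ε, f r) + ∫ r in Set.Ioo ε 1, f r := by
    have hunion : Set.Ioo (0:ℝ) ε ∪ Set.Ico ε 1 = Set.Ioo (0:ℝ) 1 :=
      Set.Ioo_union_Ico_eq_Ioo hε0 hε1.le
    rw [← hunion, setIntegral_union (Set.disjoint_left.mpr fun r h1 h2 => absurd h2.1 (not_le.mpr h1.2)) measurableSet_Ico
      (hfi.mono_set (by rw [← hunion]; exact Set.subset_union_left))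
      (hfi.mono_set (by rw [← hunion]; exact Set.subset_union_right)),
      integral_Ico_eq_integral_Ioo]
  -- integral nonneg
  have hI0 : 0 ≤ ∫ r in Set.Ioo (0:ℝ) 1, f r := by
    refine setIntegral_nonneg measurableSet_Ioo fun r hr => ?_
    have hw := hw0 r hr
    have hrp : 0 ≤ r ^ ((n : ℝ) * p) := Real.rpow_nonneg hr.1.le _
    have h2r : 0 ≤ 2 * r := by linarith [hr.1]
    exact mul_nonneg (mul_nonneg h2r hw) hrp
  -- Bernoulli bound
  have hB : (c ^ n + ε ^ n) ^ p / c ^ ((n : ℝ) * p) ≤ 1 + p * (ε / c) ^ n := by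
    have hcn : (0:ℝ) < c ^ n := by positivity
    have h1 : c ^ ((n : ℝ) * p) = (c ^ n) ^ p := by
      rw [Real.rpow_mul hc0.le, Real.rpow_natCast]
    have h2 : (c ^ n + ε ^ n) ^ p / (c ^ n) ^ p = (1 + (ε / c) ^ n) ^ p := by
      rw [← Real.div_rpow (by positivity) hcn.le]
      congr 1
      field_simp
      rw [div_pow, mul_add, mul_one, mul_div_assoc', mul_div_right_comm, div_self hcn.ne', one_mul]
    rw [h1, h2]
    have hs0 : (0:ℝ) ≤ (ε / c) ^ n := by positivity
    have := rpow_one_add_le_one_add_mul_self (s := (ε / c) ^ n)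
      (by linarith) hp0.le hp1.le
    linarith
  -- conclude
  calc ((c ^ n + ε ^ n) ^ p / c ^ ((n : ℝ) * p)) * ∫ r in Set.Ioo (0:ℝ) 1, f r
      ≤ (1 + p * (ε / c) ^ n) * ∫ r in Set.Ioo (0:ℝ) 1, f r :=
        mul_le_mul_of_nonneg_right hB hI0
    _ = (∫ r in Set.Ioo (0:ℝ) 1, f r) +
        p * (ε / c) ^ n * ∫ r in Set.Ioo (0:ℝ) 1, f r := by ring
    _ < (∫ r in Set.Ioo (0:ℝ) 1, f r) +
        (ε ^ ((n : ℝ) * p) * (∫ r in Set.Ioo (0:ℝ) ε, 2 * r * w r) -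
          ∫ r in Set.Ioo (0:ℝ) ε, f r) := by linarith [hkey]
    _ = ε ^ ((n : ℝ) * p) * (∫ r in Set.Ioo (0:ℝ) ε, 2 * r * w r) +
        ∫ r in Set.Ioo ε 1, f r := by rw [hsplit]; ring
end
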